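/- Fix ℓ > 0 and an even integer m ≥ 2 with ℓπm/√2 ≥ 1. Then Σ_{k=m/2+1}^{∞} k² e^{−2π²k²ℓ²} ≤ ∫_{m/2}^{∞} x² e^{−2π²x²ℓ²} dx = (1/√(2π)) · erfc(πℓm/√2)/(8π²ℓ³) + (m/(8π²ℓ²)) e^{−π²ℓ²m²/2}, where erfc(x) := 1 − (2/√π) ∫₀^x e^{−t²} dt. -/

import Mathlib

/-!
Since `b x² ≥ 1` on `[m/2, ∞)`, the summand `x² e^{-b x²}` (with `b = 2π²ℓ²`) is antitone
there, so the integral test bounds the sum by the tail integral. Integrating by parts against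
`-x e^{-b x²} / (2b)` reduces that integral to the Gaussian tail `∫_a^∞ e^{-b x²}`, which the
substitution `t = √b x` turns into `√π / (2√b) · erfc (√b a)`.
-/

open MeasureTheory Real

noncomputable section

def erfc (x : ℝ) : ℝ := 1 - (2 / Real.sqrt π) * ∫ t in (0:ℝ)..x, Real.exp (-t ^ 2)

section

open Set Filter Topology

theorem integrable_sq_mul_exp_neg_mul_sq {b : ℝ} (hb : 0 < b) :
    Integrable fun x : ℝ => x ^ 2 * exp (-b * x ^ 2) := by
  simpa using integrable_rpow_mul_exp_neg_mul_sq hb (s := 2) (by norm_num)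

theorem integral_Ioi_exp_neg_mul_sq_eq_erfc {b : ℝ} (hb : 0 < b) (a : ℝ) :
    ∫ x in Ioi a, exp (-b * x ^ 2) = √π / (2 * √b) * erfc (√b * a) := by
  have hsplit := intervalIntegral.integral_interval_add_Ioi (a := 0) (b := a)
    (integrable_exp_neg_mul_sq hb).integrableOn (integrable_exp_neg_mul_sq hb).integrableOn
  have hscale : ∫ t in (0:ℝ)..a, exp (-b * t ^ 2) =
      (√b)⁻¹ * ∫ t in (0:ℝ)..√b * a, exp (-t ^ 2) := by
    have := intervalIntegral.integral_comp_mul_left (fun t => exp (-t ^ 2)) (c := √b)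
      (a := 0) (b := a) (sqrt_pos.2 hb).ne'
    simpa only [mul_pow, sq_sqrt hb.le, mul_zero, smul_eq_mul, neg_mul] using this
  rw [integral_gaussian_Ioi, hscale, sqrt_div' _ hb.le] at hsplit
  rw [erfc]
  set I := ∫ x in Ioi a, exp (-b * x ^ 2)
  set J := ∫ t in (0:ℝ)..√b * a, exp (-t ^ 2)
  rw [show I = √π / √b / 2 - (√b)⁻¹ * J by linarith]
  field_simp

theorem integral_Ioi_sq_mul_exp_neg_mul_sq {b : ℝ} (hb : 0 < b) (a : ℝ) :
    ∫ x in Ioi a, x ^ 2 * exp (-b * x ^ 2) =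
      a * exp (-b * a ^ 2) / (2 * b) + (∫ x in Ioi a, exp (-b * x ^ 2)) / (2 * b) := by
  set G : ℝ → ℝ := fun x => -(x * exp (-b * x ^ 2)) / (2 * b)
  have hG : ∀ x, HasDerivAt G (x ^ 2 * exp (-b * x ^ 2) - exp (-b * x ^ 2) / (2 * b)) x := by
    intro x
    have := ((hasDerivAt_id' x).fun_mul
      ((hasDerivAt_pow 2 x).const_mul (-b)).exp).fun_neg.div_const (2 * b)
    refine this.congr_deriv ?_
    field_simp
    ring
  have hlim : Tendsto G atTop (𝓝 0) := by
    have := ((tendsto_rpow_abs_mul_exp_neg_mul_sq_cocompact hb 1).mono_left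
      atTop_le_cocompact).neg.div_const (2 * b)
    rw [neg_zero, zero_div] at this
    refine this.congr' ?_
    filter_upwards [eventually_gt_atTop 0] with x hx
    simp [G, abs_of_pos hx, neg_div]
  have hf := integrable_sq_mul_exp_neg_mul_sq hb
  have hg := (integrable_exp_neg_mul_sq hb).div_const (2 * b)
  have hibp := integral_Ioi_of_hasDerivAt_of_tendsto' (a := a) (fun x _ => hG x)
    (hf.sub hg).integrableOn hlim
  rw [integral_sub hf.integrableOn hg.integrableOn, integral_div] at hibp
  simp only [G] at hibp
  linear_combination hibp

theorem antitoneOn_sq_mul_exp_neg_mul_sq {a b : ℝ} (ha : 0 ≤ a) (hab : 1 ≤ b * a ^ 2) :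
    AntitoneOn (fun x : ℝ => x ^ 2 * exp (-b * x ^ 2)) (Ici a) := by
  intro x hx y _ hxy
  have hb : 0 < b := by nlinarith [sq_nonneg a]
  have hx2 : 1 ≤ b * x ^ 2 :=
    hab.trans (mul_le_mul_of_nonneg_left (pow_le_pow_left₀ ha hx 2) hb.le)
  have hxy2 : x ^ 2 ≤ y ^ 2 := by nlinarith [mem_Ici.1 hx]
  -- `exp t ≥ 1 + t` with `t = b (y² - x²)` and `b x² ≥ 1` give `y² ≤ x² exp (b (y² - x²))`.
  have hy2 : y ^ 2 ≤ x ^ 2 * exp (b * (y ^ 2 - x ^ 2)) := by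
    nlinarith [add_one_le_exp (b * (y ^ 2 - x ^ 2)), sq_nonneg x]
  dsimp only
  calc y ^ 2 * exp (-b * y ^ 2) ≤ x ^ 2 * exp (b * (y ^ 2 - x ^ 2)) * exp (-b * y ^ 2) := by
        gcongr
    _ = x ^ 2 * exp (-b * x ^ 2) := by rw [mul_assoc, ← exp_add]; ring_nf

end

theorem tail_second_moment_sum_general (ℓ : ℝ) (hℓ : 0 < ℓ) (m : ℕ) (hm : Even m)
    (hη : 1 ≤ ℓ * π * m / Real.sqrt 2) :
    (∑' n : ℕ, ((m / 2 + 1 + n : ℕ) : ℝ) ^ 2 *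
        Real.exp (-(2 * π ^ 2 * ((m / 2 + 1 + n : ℕ) : ℝ) ^ 2 * ℓ ^ 2))) ≤
      (∫ x in Set.Ioi ((m : ℝ) / 2), x ^ 2 * Real.exp (-(2 * π ^ 2 * x ^ 2 * ℓ ^ 2))) ∧
    (∫ x in Set.Ioi ((m : ℝ) / 2), x ^ 2 * Real.exp (-(2 * π ^ 2 * x ^ 2 * ℓ ^ 2))) =
      (1 / Real.sqrt (2 * π)) * (erfc (π * ℓ * m / Real.sqrt 2) / (8 * π ^ 2 * ℓ ^ 3)) +
        (m / (8 * π ^ 2 * ℓ ^ 2)) * Real.exp (-(π ^ 2 * ℓ ^ 2 * m ^ 2 / 2)) := by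
  set b := 2 * π ^ 2 * ℓ ^ 2 with hb_def
  have hb : 0 < b := by positivity
  have h2 : √2 ^ 2 = 2 := sq_sqrt zero_le_two
  have hsqrt_b : √b = √2 * π * ℓ := by
    rw [hb_def, show 2 * π ^ 2 * ℓ ^ 2 = (√2 * π * ℓ) ^ 2 by rw [mul_pow, mul_pow, h2]]
    exact sqrt_sq (by positivity)
  have harg : √b * (m / 2) = π * ℓ * m / √2 := by
    rw [hsqrt_b, eq_div_iff (by positivity)]
    linear_combination (π * ℓ * m / 2) * h2
  simp only [show ∀ x : ℝ, -(2 * π ^ 2 * x ^ 2 * ℓ ^ 2) = -b * x ^ 2 from fun x => by ring]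
  constructor
  · have hba : 1 ≤ b * ((m : ℝ) / 2) ^ 2 := by
      rw [← sq_sqrt hb.le, ← mul_pow, harg, mul_comm π ℓ]
      exact one_le_pow₀ hη
    obtain ⟨j, rfl⟩ := hm
    rw [show ((j + j : ℕ) : ℝ) / 2 = j by push_cast; ring] at hba ⊢
    rw [show (j + j) / 2 = j by omega]
    convert (antitoneOn_sq_mul_exp_neg_mul_sq j.cast_nonneg hba).tsum_comp_add_le_integral j
      (integrable_sq_mul_exp_neg_mul_sq hb).integrableOn (fun x _ => by positivity) using 3 with n
    rw [show j + 1 + n = n + j + 1 by omega]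
  · rw [integral_Ioi_sq_mul_exp_neg_mul_sq hb, integral_Ioi_exp_neg_mul_sq_eq_erfc hb, harg,
      hsqrt_b, sqrt_mul zero_le_two]
    have hπ : √π ^ 2 = π := sq_sqrt pi_pos.le
    set E := erfc (π * ℓ * m / √2)
    rw [hb_def]
    field_simp
    linear_combination 8 * E * hπ

/-- Tail estimate: for even `m ≥ 2` with `ℓπm/√2 ≥ 1`,
`Σ_{k=m/2+1}^{∞} k² e^{−2π²k²ℓ²} ≤ ∫_{m/2}^{∞} x² e^{−2π²x²ℓ²} dx
  = (1/√(2π)) erfc(πℓm/√2)/(8π²ℓ³) + (m/(8π²ℓ²)) e^{−π²ℓ²m²/2}`. -/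
theorem tail_second_moment_sum (ℓ : ℝ) (hℓ : 0 < ℓ) (m : ℕ) (hm : Even m) (hm2 : 2 ≤ m)
    (hη : 1 ≤ ℓ * π * m / Real.sqrt 2) :
    (∑' n : ℕ, ((m / 2 + 1 + n : ℕ) : ℝ) ^ 2 *
        Real.exp (-(2 * π ^ 2 * ((m / 2 + 1 + n : ℕ) : ℝ) ^ 2 * ℓ ^ 2))) ≤
      (∫ x in Set.Ioi ((m : ℝ) / 2), x ^ 2 * Real.exp (-(2 * π ^ 2 * x ^ 2 * ℓ ^ 2))) ∧
    (∫ x in Set.Ioi ((m : ℝ) / 2), x ^ 2 * Real.exp (-(2 * π ^ 2 * x ^ 2 * ℓ ^ 2))) =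
      (1 / Real.sqrt (2 * π)) * (erfc (π * ℓ * m / Real.sqrt 2) / (8 * π ^ 2 * ℓ ^ 3)) +
        (m / (8 * π ^ 2 * ℓ ^ 2)) * Real.exp (-(π ^ 2 * ℓ ^ 2 * m ^ 2 / 2)) :=
  tail_second_moment_sum_general ℓ hℓ m hm hη

end
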